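/- arXiv:1101.2713 — 4 statements merged into one kernel-verified Lean document; each statement's English description precedes it below -/
import Mathlib

section
/- For every pair of fixed points τ₁, τ₂ ∈ ℝ and every λ ≥ 0, the increment of the Rademacher process satisfies P( |Z'(τ₁) − Z'(τ₂)| > λ ) ≤ 2·exp( −λ² / ( |A|²·M₃²·|Ω|²·|τ₁−τ₂|² ) ). -/
/-!
Writing `Z'(τ₁) - Z'(τ₂) = ∑ εₖ vₖ`, each coefficient satisfies
`|vₖ| ≤ |A| (|ŝ(ωₖ)|² + |ŝ(ω'ₖ)|²) ω_max |τ₁ - τ₂|` because `|e^{ia} - e^{ib}| ≤ |a - b|`, so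
`∑ |vₖ|² ≤ 2 |A|² M₃² ω_max² |τ₁ - τ₂|²`, and it remains to prove the tail bound
`P(|∑ εₖ vₖ| > λ) ≤ 2 exp(-λ² / (2 ∑ |vₖ|²))` for complex Rademacher sums.
Multiplying all `vₖ` by a unit `c` making `∑ (c vₖ)²` real, the real coefficient vectors
`xₖ ± yₖ` (with `c vₖ = xₖ + i yₖ`) both have squared length `∑ |vₖ|²`. Since
`cosh √(X² + Y²) ≤ cosh X cosh Y = (cosh (X + Y) + cosh (X - Y)) / 2`, the moment generating
function of `|∑ εₖ vₖ|` is at most twice that of a real sub-Gaussian sum with variance proxy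
`∑ |vₖ|²`, and the Chernoff bound gives the claim.
-/

open MeasureTheory ProbabilityTheory Real Set
open scoped NNReal ENNReal

noncomputable section

namespace Real

theorem two_mul_sq_add_sq_pow_le (x y : ℝ) (n : ℕ) :
    2 * (x ^ 2 + y ^ 2) ^ n ≤ ((x + y) ^ 2) ^ n + ((x - y) ^ 2) ^ n := by
  have h := (convexOn_pow n).2 (mem_Ici.2 (sq_nonneg (x + y))) (mem_Ici.2 (sq_nonneg (x - y)))
    (by norm_num : (0 : ℝ) ≤ 1 / 2) (by norm_num : (0 : ℝ) ≤ 1 / 2) (by norm_num)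
  simp only [smul_eq_mul] at h
  rw [show (1 / 2 : ℝ) * (x + y) ^ 2 + 1 / 2 * (x - y) ^ 2 = x ^ 2 + y ^ 2 by ring] at h
  linarith

/-- Compare the power series of `2 cosh √(x² + y²)` and `cosh (x + y) + cosh (x - y)` termwise. -/
theorem cosh_sqrt_sq_add_sq_le (x y : ℝ) : cosh √(x ^ 2 + y ^ 2) ≤ cosh x * cosh y := by
  have hlhs := (hasSum_cosh √(x ^ 2 + y ^ 2)).mul_left 2
  have hrhs := (hasSum_cosh (x + y)).add (hasSum_cosh (x - y))
  have hterm : ∀ n : ℕ, 2 * (√(x ^ 2 + y ^ 2) ^ (2 * n) / (2 * n).factorial) ≤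
      (x + y) ^ (2 * n) / (2 * n).factorial + (x - y) ^ (2 * n) / (2 * n).factorial := by
    intro n
    rw [← add_div, ← mul_div_assoc, pow_mul, sq_sqrt (by positivity), pow_mul, pow_mul]
    gcongr
    exact two_mul_sq_add_sq_pow_le x y n
  have hsum := hasSum_le hterm hlhs hrhs
  rw [cosh_add, cosh_sub] at hsum
  linarith

end Real

namespace Complex

theorem exp_mul_norm_le_cosh_add_cosh (z : ℂ) {t : ℝ} (ht : 0 ≤ t) :
    Real.exp (t * ‖z‖) ≤ Real.cosh (t * (z.re + z.im)) + Real.cosh (t * (z.re - z.im)) := by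
  have hnorm : t * ‖z‖ = √((t * z.re) ^ 2 + (t * z.im) ^ 2) := by
    rw [norm_def, normSq_apply, show (t * z.re) ^ 2 + (t * z.im) ^ 2
      = t ^ 2 * (z.re * z.re + z.im * z.im) by ring, sqrt_mul (sq_nonneg t), sqrt_sq ht]
  calc Real.exp (t * ‖z‖) ≤ 2 * Real.cosh (t * ‖z‖) := by
        rw [Real.cosh_eq]
        linarith [Real.exp_pos (-(t * ‖z‖))]
    _ ≤ 2 * (Real.cosh (t * z.re) * Real.cosh (t * z.im)) := by
        rw [hnorm]
        gcongr
        exact Real.cosh_sqrt_sq_add_sq_le _ _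
    _ = Real.cosh (t * (z.re + z.im)) + Real.cosh (t * (z.re - z.im)) := by
        rw [mul_add, mul_sub, Real.cosh_add, Real.cosh_sub]
        ring

theorem exists_norm_eq_one_im_sq_mul_eq_zero (w : ℂ) : ∃ c : ℂ, ‖c‖ = 1 ∧ (c ^ 2 * w).im = 0 := by
  set θ := w.arg with hθ
  refine ⟨exp ((-(θ / 2) : ℝ) * I), norm_exp_ofReal_mul_I _, ?_⟩
  rw [← exp_nat_mul, ← norm_mul_exp_arg_mul_I w, ← hθ, mul_left_comm, ← exp_add]
  push_cast
  rw [show 2 * (-(θ / 2 : ℂ) * I) + θ * I = 0 by ring]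
  simp

theorem sq_re_add_im (z : ℂ) : (z.re + z.im) ^ 2 = ‖z‖ ^ 2 + (z ^ 2).im := by
  rw [Complex.sq_norm, normSq_apply, sq z, mul_im]
  ring

theorem sq_re_sub_im (z : ℂ) : (z.re - z.im) ^ 2 = ‖z‖ ^ 2 - (z ^ 2).im := by
  rw [Complex.sq_norm, normSq_apply, sq z, mul_im]
  ring

theorem norm_exp_I_mul_ofReal_sub_exp_I_mul_ofReal_le (a b : ℝ) :
    ‖exp (I * a) - exp (I * b)‖ ≤ |a - b| := by
  have h : exp (I * a) - exp (I * b) = exp (I * b) * (exp (I * (a - b : ℝ)) - 1) := by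
    rw [mul_sub, ← exp_add]
    push_cast
    ring_nf
  rw [h, norm_mul, norm_exp_I_mul_ofReal, one_mul]
  exact norm_exp_I_mul_ofReal_sub_one_le

theorem norm_exp_I_mul_mul_sub_le {ω W : ℝ} (hω : |ω| ≤ W) (s t : ℝ) :
    ‖exp (I * ω * s) - exp (I * ω * t)‖ ≤ W * |s - t| := by
  have h := norm_exp_I_mul_ofReal_sub_exp_I_mul_ofReal_le (ω * s) (ω * t)
  push_cast at h
  rw [← mul_sub, abs_mul] at h
  simpa only [mul_assoc] using h.trans (by gcongr)

theorem norm_mul_sub_mul_sq_le (A p q : ℂ) (a b : ℝ) {L : ℝ} (hp : ‖p‖ ≤ L) (hq : ‖q‖ ≤ L) :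
    ‖A * (a * p - b * q)‖ ^ 2 ≤ 2 * ‖A‖ ^ 2 * (a ^ 2 + b ^ 2) * L ^ 2 := by
  have hL : 0 ≤ L := (norm_nonneg p).trans hp
  have h : ‖a * p - b * q‖ ≤ (|a| + |b|) * L := by
    refine (norm_sub_le _ _).trans ?_
    rw [norm_mul, norm_mul, norm_real, norm_real, norm_eq_abs, norm_eq_abs, add_mul]
    gcongr
  calc ‖A * (a * p - b * q)‖ ^ 2 ≤ ‖A‖ ^ 2 * ((|a| + |b|) * L) ^ 2 := by
        rw [norm_mul, mul_pow]
        gcongr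
    _ ≤ 2 * ‖A‖ ^ 2 * (a ^ 2 + b ^ 2) * L ^ 2 := by
        have : (|a| + |b|) ^ 2 ≤ 2 * (a ^ 2 + b ^ 2) := by
          nlinarith [sq_nonneg (|a| - |b|), sq_abs a, sq_abs b]
        nlinarith [sq_nonneg L, sq_nonneg ‖A‖, mul_nonneg (sq_nonneg ‖A‖) (sq_nonneg L)]

end Complex

namespace ProbabilityTheory

def rademacher : Measure ℝ := (2 : ℝ≥0∞)⁻¹ • (Measure.dirac 1 + Measure.dirac (-1))

lemma integrable_rademacher (f : ℝ → ℝ) : Integrable f rademacher :=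
  ((integrable_dirac enorm_lt_top).add_measure (integrable_dirac enorm_lt_top)).smul_measure
    (by simp)

lemma mgf_id_rademacher (t : ℝ) : mgf id rademacher t = cosh t := by
  rw [rademacher, mgf_smul_measure, mgf_add_measure (integrable_dirac enorm_lt_top)
    (integrable_dirac enorm_lt_top), mgf_dirac', mgf_dirac', cosh_eq]
  simp only [ENNReal.toReal_inv, ENNReal.toReal_ofNat, id_eq, mul_one, mul_neg]
  ring

lemma hasSubgaussianMGF_id_rademacher : HasSubgaussianMGF id 1 rademacher where
  integrable_exp_mul t := integrable_rademacher _
  mgf_le t := by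
    rw [mgf_id_rademacher, NNReal.coe_one, one_mul]
    exact cosh_le_exp_half_sq t

namespace HasSubgaussianMGF

variable {Ω : Type*} {mΩ : MeasurableSpace Ω} {μ : Measure Ω} {X : Ω → ℝ} {c : ℝ≥0}

lemma mono (h : HasSubgaussianMGF X c μ) {c' : ℝ≥0} (hc : c ≤ c') :
    HasSubgaussianMGF X c' μ where
  integrable_exp_mul := h.integrable_exp_mul
  mgf_le t := (h.mgf_le t).trans (exp_le_exp.2 (by gcongr))

lemma integrable_cosh_mul (h : HasSubgaussianMGF X c μ) (t : ℝ) :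
    Integrable (fun ω ↦ cosh (t * X ω)) μ := by
  simp_rw [cosh_eq, ← neg_mul]
  exact ((h.integrable_exp_mul t).add (h.integrable_exp_mul (-t))).div_const 2

lemma integral_cosh_mul_le (h : HasSubgaussianMGF X c μ) (t : ℝ) :
    ∫ ω, cosh (t * X ω) ∂μ ≤ exp (c * t ^ 2 / 2) := by
  simp_rw [cosh_eq, ← neg_mul]
  rw [integral_div, integral_add (h.integrable_exp_mul t) (h.integrable_exp_mul (-t))]
  have hpos := h.mgf_le t
  have hneg := h.mgf_le (-t)
  rw [neg_sq] at hneg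
  rw [mgf] at hpos hneg
  linarith

end HasSubgaussianMGF

variable {Θ : Type*} [MeasurableSpace Θ] {μ : Measure Θ}

lemma hasSubgaussianMGF_sum_mul_of_map_eq_rademacher {ι : Type*} [Fintype ι]
    {ε : ι → Θ → ℝ} (hmeas : ∀ k, Measurable (ε k)) (hindep : iIndepFun ε μ)
    (hrad : ∀ k, μ.map (ε k) = rademacher) (d : ι → ℝ) :
    HasSubgaussianMGF (fun θ ↦ ∑ k, ε k θ * d k) (∑ k, ‖d k‖₊ ^ 2) μ := by
  refine HasSubgaussianMGF.sum_of_iIndepFun (hindep.comp _ fun k ↦ measurable_id.mul_const (d k))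
    fun k _ ↦ ?_
  have hk : HasSubgaussianMGF (ε k) 1 μ :=
    (HasSubgaussianMGF.id_map_iff (hmeas k).aemeasurable).1
      (hrad k ▸ hasSubgaussianMGF_id_rademacher)
  convert hk.const_mul (d k) using 1
  · ext θ
    exact mul_comm _ _
  · change _ = (⟨d k ^ 2, sq_nonneg (d k)⟩ : ℝ≥0) * 1
    ext
    simp

lemma mgf_norm_le_of_hasSubgaussianMGF_re_add_im {Z : Θ → ℂ} (hZ : AEMeasurable Z μ) {c : ℝ≥0}
    (hadd : HasSubgaussianMGF (fun θ ↦ (Z θ).re + (Z θ).im) c μ)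
    (hsub : HasSubgaussianMGF (fun θ ↦ (Z θ).re - (Z θ).im) c μ) {t : ℝ} (ht : 0 ≤ t) :
    Integrable (fun θ ↦ exp (t * ‖Z θ‖)) μ ∧
      mgf (fun θ ↦ ‖Z θ‖) μ t ≤ 2 * exp (c * t ^ 2 / 2) := by
  have hbound (θ : Θ) := (Z θ).exp_mul_norm_le_cosh_add_cosh ht
  have hcosh := (hadd.integrable_cosh_mul t).add (hsub.integrable_cosh_mul t)
  have hint : Integrable (fun θ ↦ exp (t * ‖Z θ‖)) μ :=
    hcosh.mono' (hZ.norm.const_mul t).exp.aestronglyMeasurable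
      (ae_of_all _ fun θ ↦ (norm_of_nonneg (exp_pos _).le).trans_le (hbound θ))
  refine ⟨hint, ?_⟩
  calc mgf (fun θ ↦ ‖Z θ‖) μ t
      ≤ ∫ θ, (cosh (t * ((Z θ).re + (Z θ).im)) + cosh (t * ((Z θ).re - (Z θ).im))) ∂μ :=
        integral_mono hint hcosh hbound
    _ ≤ exp (c * t ^ 2 / 2) + exp (c * t ^ 2 / 2) := by
        rw [integral_add (hadd.integrable_cosh_mul t) (hsub.integrable_cosh_mul t)]
        exact add_le_add (hadd.integral_cosh_mul_le t) (hsub.integral_cosh_mul_le t)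
    _ = 2 * exp (c * t ^ 2 / 2) := (two_mul _).symm

lemma measureReal_ge_le_of_mgf_le [IsFiniteMeasure μ] {X : Θ → ℝ} {C : ℝ} {c : ℝ≥0}
    (h : ∀ t, 0 ≤ t → Integrable (fun θ ↦ exp (t * X θ)) μ ∧ mgf X μ t ≤ C * exp (c * t ^ 2 / 2))
    {lam : ℝ} (hlam : 0 ≤ lam) :
    μ.real {θ | lam ≤ X θ} ≤ C * exp (-lam ^ 2 / (2 * c)) := by
  have ht : 0 ≤ lam / c := div_nonneg hlam c.2
  have hexp : -(lam / c) * lam + c * (lam / c) ^ 2 / 2 = -lam ^ 2 / (2 * c) := by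
    rcases eq_or_ne (c : ℝ) 0 with hc | hc
    · simp [hc]
    · field_simp
      ring
  calc μ.real {θ | lam ≤ X θ} ≤ exp (-(lam / c) * lam) * mgf X μ (lam / c) :=
        measure_ge_le_exp_mul_mgf lam ht (h _ ht).1
    _ ≤ exp (-(lam / c) * lam) * (C * exp (c * (lam / c) ^ 2 / 2)) := by
        gcongr
        exact (h _ ht).2
    _ = C * exp (-lam ^ 2 / (2 * c)) := by
        rw [← hexp, exp_add]
        ring

lemma measure_lt_norm_sum_mul_le_of_map_eq_rademacher [IsProbabilityMeasure μ] {ι : Type*}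
    [Fintype ι] {ε : ι → Θ → ℝ} (hmeas : ∀ k, Measurable (ε k)) (hindep : iIndepFun ε μ)
    (hrad : ∀ k, μ.map (ε k) = rademacher) (v : ι → ℂ) {σ2 : ℝ} (hσ : ∑ k, ‖v k‖ ^ 2 ≤ σ2)
    {lam : ℝ} (hlam : 0 ≤ lam) :
    μ {θ | lam < ‖∑ k, (ε k θ : ℂ) * v k‖} ≤ ENNReal.ofReal (2 * exp (-lam ^ 2 / (2 * σ2))) := by
  lift σ2 to ℝ≥0 using (Finset.sum_nonneg fun k _ ↦ sq_nonneg ‖v k‖).trans hσ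
  obtain ⟨c, hc, him⟩ := Complex.exists_norm_eq_one_im_sq_mul_eq_zero (∑ k, v k ^ 2)
  set w : ι → ℂ := fun k ↦ c * v k
  set Z : Θ → ℂ := fun θ ↦ ∑ k, (ε k θ : ℂ) * w k
  have hnorm (θ : Θ) : ‖Z θ‖ = ‖∑ k, (ε k θ : ℂ) * v k‖ := by
    simp only [Z, w, mul_left_comm _ c, ← Finset.mul_sum, norm_mul, hc, one_mul]
  have him_sum : ∑ k, (w k ^ 2).im = 0 := by
    simpa only [w, ← Complex.im_sum, mul_pow, Finset.mul_sum] using him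
  have hnorm_sum : ∑ k, ‖w k‖ ^ 2 ≤ σ2 := by
    simpa only [w, norm_mul, hc, one_mul] using hσ
  have hsubG {d : ι → ℝ} (hd : ∑ k, d k ^ 2 ≤ σ2) :
      HasSubgaussianMGF (fun θ ↦ ∑ k, ε k θ * d k) σ2 μ := by
    refine (hasSubgaussianMGF_sum_mul_of_map_eq_rademacher hmeas hindep hrad d).mono ?_
    rw [← NNReal.coe_le_coe]
    push_cast
    simpa only [coe_nnnorm, norm_eq_abs, sq_abs] using hd
  have hadd : HasSubgaussianMGF (fun θ ↦ (Z θ).re + (Z θ).im) σ2 μ := by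
    convert hsubG (d := fun k ↦ (w k).re + (w k).im) ?_ using 2 with θ
    · simp [Z, Complex.re_sum, Complex.im_sum, Finset.sum_add_distrib, mul_add]
    · simpa [Complex.sq_re_add_im, Finset.sum_add_distrib, him_sum] using hnorm_sum
  have hsub : HasSubgaussianMGF (fun θ ↦ (Z θ).re - (Z θ).im) σ2 μ := by
    convert hsubG (d := fun k ↦ (w k).re - (w k).im) ?_ using 2 with θ
    · simp [Z, Complex.re_sum, Complex.im_sum, Finset.sum_sub_distrib, mul_sub]
    · simpa [Complex.sq_re_sub_im, Finset.sum_sub_distrib, him_sum] using hnorm_sum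
  have hZmeas : AEMeasurable Z μ := by fun_prop
  have htail := measureReal_ge_le_of_mgf_le
    (fun t ht ↦ mgf_norm_le_of_hasSubgaussianMGF_re_add_im hZmeas hadd hsub ht) hlam
  simp only [hnorm] at htail
  calc μ {θ | lam < ‖∑ k, (ε k θ : ℂ) * v k‖}
      ≤ μ {θ | lam ≤ ‖∑ k, (ε k θ : ℂ) * v k‖} :=
        measure_mono (ofPred_subset_ofPred.2 fun _ ↦ le_of_lt)
    _ ≤ ENNReal.ofReal (2 * exp (-lam ^ 2 / (2 * σ2))) := by
        rw [← ofReal_measureReal]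
        exact ENNReal.ofReal_le_ofReal htail

end ProbabilityTheory

theorem rademacher_process_increment_tail_general
    {Θ : Type*} [MeasurableSpace Θ] (μ : Measure Θ) [IsProbabilityMeasure μ]
    (ωmax : ℝ)
    (shat : ℝ → ℂ)
    (A : ℂ) (τ₀ : ℝ)
    (m : ℕ)
    (ωs ωs' : Fin m → ℝ)
    (hωs : ∀ k, ωs k ∈ Set.Icc (-ωmax) ωmax)
    (hωs' : ∀ k, ωs' k ∈ Set.Icc (-ωmax) ωmax)
    (ε : Fin m → Θ → ℝ) (hεmeas : ∀ k, Measurable (ε k))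
    (hindep : iIndepFun ε μ)
    (hrad : ∀ k, μ.map (ε k)
      = (2 : ENNReal)⁻¹ • (Measure.dirac (1 : ℝ) + Measure.dirac (-1 : ℝ)))
    (Z' : ℝ → Θ → ℂ)
    (hZ' : ∀ τ θ, Z' τ θ
      = A * ∑ k : Fin m, (ε k θ : ℂ)
          * ((‖shat (ωs k)‖ ^ 2 : ℂ) * Complex.exp (Complex.I * (ωs k) * (τ - τ₀))
            - (‖shat (ωs' k)‖ ^ 2 : ℂ) * Complex.exp (Complex.I * (ωs' k) * (τ - τ₀))))
    (M₃ : ℝ)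
    (hM₃ : M₃ = Real.sqrt (∑ k : Fin m, (‖shat (ωs k)‖ ^ 4 + ‖shat (ωs' k)‖ ^ 4))) :
    ∀ τ₁ τ₂ : ℝ, ∀ lam : ℝ, 0 ≤ lam →
      μ {θ | lam < ‖Z' τ₁ θ - Z' τ₂ θ‖}
        ≤ ENNReal.ofReal (2 * Real.exp (-(lam ^ 2)
            / (‖A‖ ^ 2 * M₃ ^ 2 * (2 * ωmax) ^ 2 * |τ₁ - τ₂| ^ 2))) := by
  intro τ₁ τ₂ lam hlam
  let e (ω τ : ℝ) : ℂ := Complex.exp (Complex.I * ω * (τ - τ₀))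
  let v (k : Fin m) : ℂ := A * ((‖shat (ωs k)‖ ^ 2 : ℂ) * (e (ωs k) τ₁ - e (ωs k) τ₂)
    - (‖shat (ωs' k)‖ ^ 2 : ℂ) * (e (ωs' k) τ₁ - e (ωs' k) τ₂))
  have hincrement (θ : Θ) : Z' τ₁ θ - Z' τ₂ θ = ∑ k, (ε k θ : ℂ) * v k := by
    rw [hZ', hZ', ← mul_sub, ← Finset.sum_sub_distrib, Finset.mul_sum]
    exact Finset.sum_congr rfl fun k _ ↦ by ring
  have hphase {ω : ℝ} (hω : ω ∈ Icc (-ωmax) ωmax) : ‖e ω τ₁ - e ω τ₂‖ ≤ ωmax * |τ₁ - τ₂| := by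
    simpa [e] using Complex.norm_exp_I_mul_mul_sub_le (abs_le.2 hω) (τ₁ - τ₀) (τ₂ - τ₀)
  have hvariance :
      ∑ k, ‖v k‖ ^ 2 ≤ ‖A‖ ^ 2 * M₃ ^ 2 * (2 * ωmax) ^ 2 * |τ₁ - τ₂| ^ 2 / 2 := by
    calc ∑ k, ‖v k‖ ^ 2 ≤ ∑ k, 2 * ‖A‖ ^ 2 * (‖shat (ωs k)‖ ^ 4 + ‖shat (ωs' k)‖ ^ 4)
          * (ωmax * |τ₁ - τ₂|) ^ 2 := by
          refine Finset.sum_le_sum fun k _ ↦ ?_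
          have h := Complex.norm_mul_sub_mul_sq_le A _ _ (‖shat (ωs k)‖ ^ 2) (‖shat (ωs' k)‖ ^ 2)
            (hphase (hωs k)) (hphase (hωs' k))
          push_cast at h
          rwa [← pow_mul, ← pow_mul] at h
      _ = ‖A‖ ^ 2 * M₃ ^ 2 * (2 * ωmax) ^ 2 * |τ₁ - τ₂| ^ 2 / 2 := by
          rw [← Finset.sum_mul, ← Finset.mul_sum, hM₃, sq_sqrt (by positivity)]
          ring
  simp_rw [hincrement]
  convert measure_lt_norm_sum_mul_le_of_map_eq_rademacher hεmeas hindep hrad v hvariance hlam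
    using 5
  ring

/-- **Lemma (increment tail of the Rademacher process).**
For fixed `τ₁, τ₂ ∈ ℝ` and every `λ ≥ 0`,
`P(|Z'(τ₁) − Z'(τ₂)| > λ) ≤ 2 exp(−λ²/(|A|²M₃²|Ω|²|τ₁−τ₂|²))`. -/
theorem rademacher_process_increment_tail
    {Θ : Type*} [MeasurableSpace Θ] (μ : Measure Θ) [IsProbabilityMeasure μ]
    (ωmax : ℝ) (hωmax : 0 < ωmax)
    (shat : ℝ → ℂ) (hmeas : Measurable shat)
    (hbd : ∃ C : ℝ, ∀ x : ℝ, ‖shat x‖ ≤ C)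
    (hvanish : ∀ x : ℝ, x ∉ Set.Icc (-ωmax) ωmax → shat x = 0)
    (A : ℂ) (hA : A ≠ 0) (τ₀ : ℝ)
    (m : ℕ) (hm : 0 < m)
    (ωs ωs' : Fin m → ℝ)
    (hωs : ∀ k, ωs k ∈ Set.Icc (-ωmax) ωmax)
    (hωs' : ∀ k, ωs' k ∈ Set.Icc (-ωmax) ωmax)
    (hpos : 0 < ∑ k : Fin m, (‖shat (ωs k)‖ ^ 4 + ‖shat (ωs' k)‖ ^ 4))
    (ε : Fin m → Θ → ℝ) (hεmeas : ∀ k, Measurable (ε k))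
    (hindep : iIndepFun ε μ)
    (hrad : ∀ k, μ.map (ε k)
      = (2 : ENNReal)⁻¹ • (Measure.dirac (1 : ℝ) + Measure.dirac (-1 : ℝ)))
    (Z' : ℝ → Θ → ℂ)
    (hZ' : ∀ τ θ, Z' τ θ
      = A * ∑ k : Fin m, (ε k θ : ℂ)
          * ((‖shat (ωs k)‖ ^ 2 : ℂ) * Complex.exp (Complex.I * (ωs k) * (τ - τ₀))
            - (‖shat (ωs' k)‖ ^ 2 : ℂ) * Complex.exp (Complex.I * (ωs' k) * (τ - τ₀))))
    (M₃ : ℝ)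
    (hM₃ : M₃ = Real.sqrt (∑ k : Fin m, (‖shat (ωs k)‖ ^ 4 + ‖shat (ωs' k)‖ ^ 4))) :
    ∀ τ₁ τ₂ : ℝ, ∀ lam : ℝ, 0 ≤ lam →
      μ {θ | lam < ‖Z' τ₁ θ - Z' τ₂ θ‖}
        ≤ ENNReal.ofReal (2 * Real.exp (-(lam ^ 2)
            / (‖A‖ ^ 2 * M₃ ^ 2 * (2 * ωmax) ^ 2 * |τ₁ - τ₂| ^ 2))) :=
  rademacher_process_increment_tail_general μ ωmax shat A τ₀ m ωs ωs' hωs hωs' ε hεmeas hindep hrad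
    Z' hZ' M₃ hM₃

end
end

section
/- For every fixed τ ∈ ℝ, the estimator satisfies E[ |R̃_ss(τ) − A·R_ss(τ−τ₀)|² ] ≤ (η²/m)·( μ₁² − 4π²·|R_ss(τ−τ₀)|²/‖ŝ‖₂⁴ ) ≤ η²·μ₁²/m, and consequently E[ |R̃_ss(τ) − A·R_ss(τ−τ₀)| ] ≤ η·μ₁/√m. -/
/-!
Put `f w = |ŝ(w)|² e^{iw(τ-τ₀)}`. Then `R̃_ss(τ) - A R_ss(τ-τ₀)` is `A/2π` times the error of the
Monte Carlo estimate `(|Ω|/m) ∑ f(ω_k)` of `∫_Ω f = 2π R_ss(τ-τ₀)`. The summands are independent, so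
variances add (for complex values, separately for real and imaginary parts), and the mean-square
error is exactly `(|Ω| ∫_Ω |f|² - |∫_Ω f|²)/m` with `|f|² = |ŝ|⁴`: the first bound holds with
equality. The first-moment bound is `(E|Z|)² ≤ E|Z|²`.
-/

open MeasureTheory ProbabilityTheory Real Set

noncomputable section

section MonteCarlo

variable {Θ : Type*} [MeasurableSpace Θ] {μ : Measure Θ} [IsProbabilityMeasure μ]

lemma integral_norm_sub_integral_sq_eq_variance_re_add_variance_im {Y : Θ → ℂ}
    (hY : MemLp Y 2 μ) :
    ∫ θ, ‖Y θ - μ[Y]‖ ^ 2 ∂μ = Var[fun θ ↦ (Y θ).re; μ] + Var[fun θ ↦ (Y θ).im; μ] := by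
  have hre : MemLp (fun θ ↦ (Y θ).re) 2 μ := hY.re
  have him : MemLp (fun θ ↦ (Y θ).im) 2 μ := hY.im
  have hint := hY.integrable one_le_two
  have hμre : ∫ θ, (Y θ).re ∂μ = (μ[Y]).re := integral_re hint
  have hμim : ∫ θ, (Y θ).im ∂μ = (μ[Y]).im := integral_im hint
  have hre' : Integrable (fun θ ↦ ((Y θ).re - (μ[Y]).re) ^ 2) μ :=
    (hre.sub (memLp_const _)).integrable_sq
  have him' : Integrable (fun θ ↦ ((Y θ).im - (μ[Y]).im) ^ 2) μ :=
    (him.sub (memLp_const _)).integrable_sq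
  rw [variance_eq_integral hre.aemeasurable, variance_eq_integral him.aemeasurable, hμre, hμim,
    ← integral_add hre' him']
  congr with θ
  rw [Complex.sq_norm, Complex.normSq_apply, Complex.sub_re, Complex.sub_im]
  ring

lemma integral_norm_sub_integral_sq_eq_sub {Y : Θ → ℂ} (hY : MemLp Y 2 μ) :
    ∫ θ, ‖Y θ - μ[Y]‖ ^ 2 ∂μ = ∫ θ, ‖Y θ‖ ^ 2 ∂μ - ‖μ[Y]‖ ^ 2 := by
  have hre : MemLp (fun θ ↦ (Y θ).re) 2 μ := hY.re
  have him : MemLp (fun θ ↦ (Y θ).im) 2 μ := hY.im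
  have hint := hY.integrable one_le_two
  have hμre : ∫ θ, (Y θ).re ∂μ = (μ[Y]).re := integral_re hint
  have hμim : ∫ θ, (Y θ).im ∂μ = (μ[Y]).im := integral_im hint
  have hsq : ∫ θ, ‖Y θ‖ ^ 2 ∂μ = ∫ θ, (Y θ).re ^ 2 ∂μ + ∫ θ, (Y θ).im ^ 2 ∂μ := by
    rw [← integral_add hre.integrable_sq him.integrable_sq]
    congr with θ
    rw [Complex.sq_norm, Complex.normSq_apply]
    ring
  rw [integral_norm_sub_integral_sq_eq_variance_re_add_variance_im hY, variance_eq_sub hre,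
    variance_eq_sub him, hsq, Complex.sq_norm, Complex.normSq_apply]
  simp only [Pi.pow_apply, hμre, hμim]
  ring

lemma sq_integral_le_integral_sq {X : Θ → ℝ} (hX : MemLp X 2 μ) :
    μ[X] ^ 2 ≤ ∫ θ, X θ ^ 2 ∂μ := by
  have := variance_eq_sub hX ▸ variance_nonneg X μ
  simpa [sub_nonneg] using this

lemma integral_le_of_integral_sq_le {X : Θ → ℝ} (hX : MemLp X 2 μ) {B : ℝ} (hB : 0 ≤ B)
    (h : ∫ θ, X θ ^ 2 ∂μ ≤ B ^ 2) : μ[X] ≤ B :=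
  le_of_sq_le_sq ((sq_integral_le_integral_sq hX).trans h) hB

lemma integral_norm_sum_sub_integral_sq {ι : Type*} {s : Finset ι} {Y : ι → Θ → ℂ}
    (hY : ∀ i ∈ s, MemLp (Y i) 2 μ) (hind : Set.Pairwise s fun i j ↦ Y i ⟂ᵢ[μ] Y j) :
    ∫ θ, ‖∑ i ∈ s, Y i θ - ∫ θ', ∑ i ∈ s, Y i θ' ∂μ‖ ^ 2 ∂μ
      = ∑ i ∈ s, ∫ θ, ‖Y i θ - μ[Y i]‖ ^ 2 ∂μ := by
  have hvar (L : ℂ →L[ℝ] ℝ) :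
      Var[fun θ ↦ L (∑ i ∈ s, Y i θ); μ] = ∑ i ∈ s, Var[fun θ ↦ L (Y i θ); μ] := by
    have := IndepFun.variance_sum (X := fun i θ ↦ L (Y i θ)) (fun i hi ↦ L.comp_memLp' (hY i hi))
      fun i hi j hj hij ↦ (hind hi hj hij).comp L.measurable L.measurable
    simpa only [map_sum, Finset.sum_fn] using this
  have hre := hvar Complex.reCLM
  have him := hvar Complex.imCLM
  simp only [Complex.reCLM_apply, Complex.imCLM_apply] at hre him
  rw [integral_norm_sub_integral_sq_eq_variance_re_add_variance_im (memLp_finsetSum s hY), hre,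
    him, ← Finset.sum_add_distrib]
  exact Finset.sum_congr rfl fun i hi ↦
    (integral_norm_sub_integral_sq_eq_variance_re_add_variance_im (hY i hi)).symm

lemma integral_norm_sum_comp_sub_sq_eq {ι α : Type*} [Fintype ι] [MeasurableSpace α]
    {X : ι → Θ → α} {ν : Measure α} {F : α → ℂ} (hX : ∀ i, AEMeasurable (X i) μ)
    (hmap : ∀ i, μ.map (X i) = ν) (hind : iIndepFun X μ) (hF : MemLp F 2 ν) :
    ∫ θ, ‖∑ i, F (X i θ) - Fintype.card ι * ∫ x, F x ∂ν‖ ^ 2 ∂μ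
      = Fintype.card ι * (∫ x, ‖F x‖ ^ 2 ∂ν - ‖∫ x, F x ∂ν‖ ^ 2) := by
  have hY i : MemLp (fun θ ↦ F (X i θ)) 2 μ := (hmap i ▸ hF).comp_of_map (hX i)
  have hmean i : ∫ θ, F (X i θ) ∂μ = ∫ x, F x ∂ν := by
    rw [← hmap i, integral_map (hX i) (hmap i ▸ hF.1)]
  have hsq i : ∫ θ, ‖F (X i θ)‖ ^ 2 ∂μ = ∫ x, ‖F x‖ ^ 2 ∂ν := by
    rw [← hmap i, integral_map (hX i) (hmap i ▸ hF.1.norm.pow 2)]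
  have hsum : ∫ θ, ∑ i, F (X i θ) ∂μ = Fintype.card ι * ∫ x, F x ∂ν := by
    rw [integral_finsetSum _ fun i _ ↦ (hY i).integrable one_le_two]
    simp [hmean]
  have hpair : Set.Pairwise (Finset.univ : Finset ι) fun i j ↦
      (fun θ ↦ F (X i θ)) ⟂ᵢ[μ] (fun θ ↦ F (X j θ)) := fun i _ j _ hij ↦
    (hind.indepFun hij).comp₀ (hX i) (hX j) (hmap i ▸ hF.1.aemeasurable)
      (hmap j ▸ hF.1.aemeasurable)
  rw [← hsum, integral_norm_sum_sub_integral_sq (fun i _ ↦ hY i) hpair,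
    Finset.sum_congr rfl fun i _ ↦ integral_norm_sub_integral_sq_eq_sub (hY i)]
  simp [hmean, hsq, mul_sub]

theorem integral_norm_monteCarlo_sub_sq {ι α : Type*} [Fintype ι] [Nonempty ι]
    [MeasurableSpace α] {ν : Measure α} {S : Set α} {L : ℝ} (hL : 0 < L) {X : ι → Θ → α}
    (hX : ∀ i, AEMeasurable (X i) μ) (hind : iIndepFun X μ)
    (hunif : ∀ i, μ.map (X i) = (ENNReal.ofReal L)⁻¹ • ν.restrict S) {g : α → ℂ}
    (hg : MemLp g 2 (ν.restrict S)) :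
    ∫ θ, ‖(L / Fintype.card ι : ℝ) • ∑ i, g (X i θ) - ∫ x in S, g x ∂ν‖ ^ 2 ∂μ
      = (L * ∫ x in S, ‖g x‖ ^ 2 ∂ν - ‖∫ x in S, g x ∂ν‖ ^ 2) / Fintype.card ι := by
  have hn : (Fintype.card ι : ℝ) ≠ 0 := Nat.cast_ne_zero.2 Fintype.card_ne_zero
  have hn' : (Fintype.card ι : ℂ) ≠ 0 := Nat.cast_ne_zero.2 Fintype.card_ne_zero
  have hL0 : (L : ℂ) ≠ 0 := Complex.ofReal_ne_zero.2 hL.ne'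
  have hint {E : Type} [NormedAddCommGroup E] [NormedSpace ℝ E] (h : α → E) :
      ∫ x, h x ∂((ENNReal.ofReal L)⁻¹ • ν.restrict S) = L⁻¹ • ∫ x in S, h x ∂ν := by
    rw [integral_smul_measure, ENNReal.toReal_inv, ENNReal.toReal_ofReal hL.le]
  have hcenter θ : (L / Fintype.card ι : ℝ) • ∑ i, g (X i θ) - ∫ x in S, g x ∂ν
      = (L / Fintype.card ι : ℝ) • (∑ i, g (X i θ)
        - Fintype.card ι * ∫ x, g x ∂((ENNReal.ofReal L)⁻¹ • ν.restrict S)) := by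
    rw [hint, smul_sub, Complex.real_smul, Complex.real_smul, Complex.real_smul]
    push_cast
    field_simp
  simp_rw [hcenter, norm_smul, mul_pow]
  rw [integral_const_mul, integral_norm_sum_comp_sub_sq_eq hX hunif hind
    (hg.smul_measure (by simp [hL])), hint, hint, Real.norm_of_nonneg (by positivity), norm_smul,
    Real.norm_of_nonneg (by positivity), smul_eq_mul]
  field_simp

lemma memLp_monteCarlo_sub {ι α : Type*} [Fintype ι] [MeasurableSpace α] {ν : Measure α}
    {S : Set α} {L : ℝ} (hL : 0 < L) {X : ι → Θ → α} (hX : ∀ i, AEMeasurable (X i) μ)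
    (hunif : ∀ i, μ.map (X i) = (ENNReal.ofReal L)⁻¹ • ν.restrict S) {g : α → ℂ}
    (hg : MemLp g 2 (ν.restrict S)) :
    MemLp (fun θ ↦ (L / Fintype.card ι : ℝ) • ∑ i, g (X i θ) - ∫ x in S, g x ∂ν) 2 μ := by
  have hgX i : MemLp (fun θ ↦ g (X i θ)) 2 μ :=
    (hunif i ▸ hg.smul_measure (by simp [hL])).comp_of_map (hX i)
  exact MemLp.sub ((memLp_finsetSum _ fun i _ ↦ hgX i).const_smul (L / Fintype.card ι : ℝ))
    (memLp_const (∫ x in S, g x ∂ν))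

end MonteCarlo

def autocorrIntegrand (shat : ℝ → ℂ) (t w : ℝ) : ℂ :=
  (‖shat w‖ ^ 2 : ℂ) * Complex.exp (Complex.I * w * t)

def autocorr (shat : ℝ → ℂ) (ωmax t : ℝ) : ℂ :=
  1 / (2 * π) * ∫ w in Icc (-ωmax) ωmax, autocorrIntegrand shat t w

def autocorrEstimate (shat : ℝ → ℂ) (ωmax : ℝ) {m : ℕ} (ωs : Fin m → ℝ) (t : ℝ) : ℂ :=
  1 / (2 * π) * ((2 * ωmax / m : ℝ) • ∑ k, autocorrIntegrand shat t (ωs k))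

lemma norm_autocorrIntegrand (shat : ℝ → ℂ) (t w : ℝ) :
    ‖autocorrIntegrand shat t w‖ = ‖shat w‖ ^ 2 := by
  simp [autocorrIntegrand, Complex.norm_exp]

lemma memLp_autocorrIntegrand {shat : ℝ → ℂ} (hmeas : Measurable shat) {C : ℝ}
    (hC : ∀ x, ‖shat x‖ ≤ C) (t : ℝ) {ν : Measure ℝ} [IsFiniteMeasure ν] :
    MemLp (autocorrIntegrand shat t) 2 ν := by
  refine MemLp.of_bound (by unfold autocorrIntegrand; fun_prop) (C ^ 2) (ae_of_all _ fun w ↦ ?_)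
  rw [norm_autocorrIntegrand]
  exact pow_le_pow_left₀ (norm_nonneg _) (hC w) 2

section Estimator

variable {Θ : Type*} [MeasurableSpace Θ] {μ : Measure Θ} [IsProbabilityMeasure μ] {ωmax : ℝ}
  {shat : ℝ → ℂ} {m : ℕ} {ω : Fin m → Θ → ℝ}

lemma autocorrEstimate_sub_autocorr (ωs : Fin m → ℝ) (t : ℝ) :
    autocorrEstimate shat ωmax ωs t - autocorr shat ωmax t = 1 / (2 * π)
      * ((2 * ωmax / m : ℝ) • ∑ k, autocorrIntegrand shat t (ωs k)
        - ∫ w in Icc (-ωmax) ωmax, autocorrIntegrand shat t w) :=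
  (mul_sub _ _ _).symm

lemma memLp_autocorrEstimate_sub (hωmax : 0 < ωmax) (hmeas : Measurable shat) {C : ℝ}
    (hC : ∀ x, ‖shat x‖ ≤ C) (hω : ∀ k, AEMeasurable (ω k) μ)
    (hunif : ∀ k, μ.map (ω k)
      = (ENNReal.ofReal (2 * ωmax))⁻¹ • volume.restrict (Icc (-ωmax) ωmax)) (t : ℝ) :
    MemLp (fun θ ↦ autocorrEstimate shat ωmax (ω · θ) t - autocorr shat ωmax t) 2 μ := by
  have h := memLp_monteCarlo_sub (by positivity) hω hunif (memLp_autocorrIntegrand hmeas hC t)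
  rw [Fintype.card_fin] at h
  simp_rw [autocorrEstimate_sub_autocorr]
  exact h.const_mul _

lemma integral_norm_autocorrEstimate_sub_sq (hωmax : 0 < ωmax) (hmeas : Measurable shat) {C : ℝ}
    (hC : ∀ x, ‖shat x‖ ≤ C) (hm : 0 < m) (hω : ∀ k, AEMeasurable (ω k) μ)
    (hindep : iIndepFun ω μ) (hunif : ∀ k, μ.map (ω k)
      = (ENNReal.ofReal (2 * ωmax))⁻¹ • volume.restrict (Icc (-ωmax) ωmax)) (t : ℝ) :
    ∫ θ, ‖autocorrEstimate shat ωmax (ω · θ) t - autocorr shat ωmax t‖ ^ 2 ∂μ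
      = (2 * ωmax * (∫ w in Icc (-ωmax) ωmax, ‖shat w‖ ^ 4)
        - (2 * π) ^ 2 * ‖autocorr shat ωmax t‖ ^ 2) / ((2 * π) ^ 2 * m) := by
  have : Nonempty (Fin m) := ⟨⟨0, hm⟩⟩
  have h := integral_norm_monteCarlo_sub_sq (by positivity) hω hindep hunif
    (memLp_autocorrIntegrand hmeas hC t)
  have hint : ∫ w in Icc (-ωmax) ωmax, autocorrIntegrand shat t w = 2 * π * autocorr shat ωmax t := by
    rw [autocorr, ← mul_assoc, mul_one_div_cancel (by simp [pi_ne_zero]), one_mul]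
  have hsq w : ‖autocorrIntegrand shat t w‖ ^ 2 = ‖shat w‖ ^ 4 := by
    rw [norm_autocorrIntegrand]; ring
  simp_rw [Fintype.card_fin, hsq, hint] at h
  simp_rw [autocorrEstimate_sub_autocorr, hint, norm_mul, mul_pow]
  rw [integral_const_mul, h]
  simp only [norm_mul, Complex.norm_div, Complex.norm_ofNat, Complex.norm_real, norm_one,
    norm_eq_abs, abs_of_pos pi_pos]
  field_simp

end Estimator

theorem pointwise_variance_bound_general
    {Θ : Type*} [MeasurableSpace Θ] (μ : Measure Θ) [IsProbabilityMeasure μ]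
    (ωmax : ℝ) (hωmax : 0 < ωmax)
    (shat : ℝ → ℂ) (hmeas : Measurable shat)
    (hbd : ∃ C : ℝ, ∀ x : ℝ, ‖shat x‖ ≤ C)
    (m : ℕ) (hm : 0 < m)
    (ω : Fin m → Θ → ℝ) (hωmeas : ∀ k, Measurable (ω k))
    (hindep : iIndepFun ω μ)
    (hunif : ∀ k, μ.map (ω k)
      = (ENNReal.ofReal (2 * ωmax))⁻¹ • volume.restrict (Set.Icc (-ωmax) ωmax))
    (A : ℂ) (τ₀ : ℝ)
    (Rss : ℝ → ℂ)
    (hRss : ∀ τ : ℝ, Rss τ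
      = (1 / (2 * π)) * ∫ w in Set.Icc (-ωmax) ωmax,
          (‖shat w‖ ^ 2 : ℂ) * Complex.exp (Complex.I * w * τ))
    (Rt : ℝ → Θ → ℂ)
    (hRt : ∀ τ θ, Rt τ θ
      = ((2 * ωmax) / (2 * π * m))
        * (A * ∑ k : Fin m, (‖shat (ω k θ)‖ ^ 2 : ℂ)
            * Complex.exp (Complex.I * (ω k θ) * (τ - τ₀))))
    (nrm2 nrm4 : ℝ) (h2pos : 0 < nrm2)
    (h4 : nrm4 ^ 4 = ∫ w in Set.Icc (-ωmax) ωmax, ‖shat w‖ ^ 4)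
    (η μ₁ : ℝ)
    (hη : η = ‖A‖ * nrm2 ^ 2 / (2 * π))
    (hμ₁ : μ₁ = Real.sqrt (2 * ωmax) * nrm4 ^ 2 / nrm2 ^ 2) :
    ∀ τ : ℝ,
      (∫ θ, ‖Rt τ θ - A * Rss (τ - τ₀)‖ ^ 2 ∂μ
        ≤ η ^ 2 / m * (μ₁ ^ 2 - 4 * π ^ 2 * ‖Rss (τ - τ₀)‖ ^ 2 / nrm2 ^ 4))
      ∧ (η ^ 2 / m * (μ₁ ^ 2 - 4 * π ^ 2 * ‖Rss (τ - τ₀)‖ ^ 2 / nrm2 ^ 4)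
        ≤ η ^ 2 * μ₁ ^ 2 / m)
      ∧ (∫ θ, ‖Rt τ θ - A * Rss (τ - τ₀)‖ ∂μ ≤ η * μ₁ / Real.sqrt m) := by
  intro τ
  obtain ⟨C, hC⟩ := hbd
  have hR : Rss (τ - τ₀) = autocorr shat ωmax (τ - τ₀) := hRss _
  have hdev θ : Rt τ θ - A * Rss (τ - τ₀)
      = A * (autocorrEstimate shat ωmax (ω · θ) (τ - τ₀) - autocorr shat ωmax (τ - τ₀)) := by
    have hm0 : (m : ℂ) ≠ 0 := by exact_mod_cast hm.ne'
    have hsum : ∑ k, (‖shat (ω k θ)‖ ^ 2 : ℂ) * Complex.exp (Complex.I * (ω k θ) * (τ - τ₀))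
        = ∑ k, autocorrIntegrand shat (τ - τ₀) (ω k θ) := by
      simp only [autocorrIntegrand, Complex.ofReal_sub]
    rw [hRt, hsum, hR, autocorrEstimate, Complex.real_smul]
    push_cast
    field_simp
  have hmse : ∫ θ, ‖Rt τ θ - A * Rss (τ - τ₀)‖ ^ 2 ∂μ
      = η ^ 2 / m * (μ₁ ^ 2 - 4 * π ^ 2 * ‖Rss (τ - τ₀)‖ ^ 2 / nrm2 ^ 4) := by
    have hμ₁sq : μ₁ ^ 2 = 2 * ωmax * nrm4 ^ 4 / nrm2 ^ 4 := by
      rw [hμ₁, div_pow, mul_pow, sq_sqrt (by positivity), ← pow_mul, ← pow_mul]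
    simp_rw [hdev, norm_mul, mul_pow]
    rw [integral_const_mul, integral_norm_autocorrEstimate_sub_sq hωmax hmeas hC hm
      (fun k ↦ (hωmeas k).aemeasurable) hindep hunif, ← h4, hR, hη, hμ₁sq]
    field_simp
    ring
  have hbound : η ^ 2 / m * (μ₁ ^ 2 - 4 * π ^ 2 * ‖Rss (τ - τ₀)‖ ^ 2 / nrm2 ^ 4)
      ≤ η ^ 2 * μ₁ ^ 2 / m :=
    (mul_le_mul_of_nonneg_left (sub_le_self _ (by positivity)) (by positivity)).trans_eq (by ring)
  refine ⟨hmse.le, hbound, ?_⟩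
  have hZ : MemLp (fun θ ↦ ‖Rt τ θ - A * Rss (τ - τ₀)‖) 2 μ := by
    simp_rw [hdev]
    exact ((memLp_autocorrEstimate_sub hωmax hmeas hC (fun k ↦ (hωmeas k).aemeasurable) hunif
      _).const_mul A).norm
  refine integral_le_of_integral_sq_le hZ (by rw [hη, hμ₁]; positivity) ?_
  rwa [hmse, div_pow, mul_pow, sq_sqrt (Nat.cast_nonneg m)]

/-- **Pointwise variance/deviation bound for the estimator.**
For every fixed `τ ∈ ℝ`:
`E[|R̃_ss(τ) − A R_ss(τ−τ₀)|²] ≤ (η²/m)(μ₁² − 4π²|R_ss(τ−τ₀)|²/‖ŝ‖₂⁴) ≤ η²μ₁²/m`,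
and consequently `E[|R̃_ss(τ) − A R_ss(τ−τ₀)|] ≤ ημ₁/√m`. -/
theorem pointwise_variance_bound
    {Θ : Type*} [MeasurableSpace Θ] (μ : Measure Θ) [IsProbabilityMeasure μ]
    (ωmax : ℝ) (hωmax : 0 < ωmax)
    (shat : ℝ → ℂ) (hmeas : Measurable shat)
    (hbd : ∃ C : ℝ, ∀ x : ℝ, ‖shat x‖ ≤ C)
    (hvanish : ∀ x : ℝ, x ∉ Set.Icc (-ωmax) ωmax → shat x = 0)
    (m : ℕ) (hm : 0 < m)
    (ω : Fin m → Θ → ℝ) (hωmeas : ∀ k, Measurable (ω k))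
    (hindep : iIndepFun ω μ)
    (hunif : ∀ k, μ.map (ω k)
      = (ENNReal.ofReal (2 * ωmax))⁻¹ • volume.restrict (Set.Icc (-ωmax) ωmax))
    (A : ℂ) (hA : A ≠ 0) (τ₀ : ℝ)
    (Rss : ℝ → ℂ)
    (hRss : ∀ τ : ℝ, Rss τ
      = (1 / (2 * π)) * ∫ w in Set.Icc (-ωmax) ωmax,
          (‖shat w‖ ^ 2 : ℂ) * Complex.exp (Complex.I * w * τ))
    (Rt : ℝ → Θ → ℂ)
    (hRt : ∀ τ θ, Rt τ θ
      = ((2 * ωmax) / (2 * π * m))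
        * (A * ∑ k : Fin m, (‖shat (ω k θ)‖ ^ 2 : ℂ)
            * Complex.exp (Complex.I * (ω k θ) * (τ - τ₀))))
    (nrm2 nrm4 : ℝ) (h2pos : 0 < nrm2)
    (h2 : nrm2 ^ 2 = ∫ w in Set.Icc (-ωmax) ωmax, ‖shat w‖ ^ 2)
    (h4 : nrm4 ^ 4 = ∫ w in Set.Icc (-ωmax) ωmax, ‖shat w‖ ^ 4)
    (η μ₁ : ℝ)
    (hη : η = ‖A‖ * nrm2 ^ 2 / (2 * π))
    (hμ₁ : μ₁ = Real.sqrt (2 * ωmax) * nrm4 ^ 2 / nrm2 ^ 2) :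
    ∀ τ : ℝ,
      (∫ θ, ‖Rt τ θ - A * Rss (τ - τ₀)‖ ^ 2 ∂μ
        ≤ η ^ 2 / m * (μ₁ ^ 2 - 4 * π ^ 2 * ‖Rss (τ - τ₀)‖ ^ 2 / nrm2 ^ 4))
      ∧ (η ^ 2 / m * (μ₁ ^ 2 - 4 * π ^ 2 * ‖Rss (τ - τ₀)‖ ^ 2 / nrm2 ^ 4)
        ≤ η ^ 2 * μ₁ ^ 2 / m)
      ∧ (∫ θ, ‖Rt τ θ - A * Rss (τ - τ₀)‖ ∂μ ≤ η * μ₁ / Real.sqrt m) :=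
  pointwise_variance_bound_general μ ωmax hωmax shat hmeas hbd m hm ω hωmeas hindep hunif A τ₀ Rss
    hRss Rt hRt nrm2 nrm4 h2pos h4 η μ₁ hη hμ₁

end
end

section
/- Fix δ > 0. Then the random variable M₃ satisfies P( M₃ > 2.37 · max( M₁ , M·√(log(4/δ)) ) ) ≤ δ/4. -/
/-!
The summands `|ŝ(ω)|⁴` of `M₃²` are `2m` independent variables with values in `[0, M²]` and
mean `‖ŝ‖₄⁴ / |Ω|`. Convexity gives `eˣ ≤ 1 + (e - 1) x` on `[0, 1]`, so at `t = M⁻²` each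
moment generating function is at most `exp ((e - 1) t 𝔼)`, and Chernoff's bound yields
`P(M₃² ≥ ε) ≤ exp (-(ε - 2 (e - 1) M₁²) / M²)`. For `ε = (2.37 max(M₁, M √log(4/δ)))²` the
exponent is at most `-log(4/δ)`, because `2.37² ≥ 2e - 1`.
-/

open MeasureTheory ProbabilityTheory Real Set

lemma Real.exp_le_one_add_exp_one_sub_one_mul {x : ℝ} (h0 : 0 ≤ x) (h1 : x ≤ 1) :
    exp x ≤ 1 + (exp 1 - 1) * x := by
  have h := convexOn_exp.2 (mem_univ 0) (mem_univ 1) (sub_nonneg.2 h1) h0 (sub_add_cancel 1 x)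
  simp only [smul_eq_mul, mul_zero, mul_one, zero_add, exp_zero] at h
  linarith

lemma Real.le_biSup_of_eq_zero_of_notMem {α : Type*} {f : α → ℝ} {s : Set α}
    (hf : BddAbove (range f)) (hf0 : ∀ x, 0 ≤ f x) (hs : ∀ x ∉ s, f x = 0) (x : α) :
    f x ≤ ⨆ y ∈ s, f y := by
  by_cases hx : x ∈ s
  · obtain ⟨C, hC⟩ := hf
    refine le_ciSup₂ (f := fun y (_ : y ∈ s) => f y) ⟨C, ?_⟩ x hx
    simp only [mem_upperBounds, mem_iUnion, mem_range]
    rintro _ ⟨y, -, rfl⟩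
    exact hC ⟨y, rfl⟩
  · rw [hs x hx]
    exact Real.iSup_nonneg fun y => Real.iSup_nonneg fun _ => hf0 y

lemma sq_add_two_mul_exp_one_sub_one_mul_sq_le {a b : ℝ} (ha : 0 ≤ a) (hb : 0 ≤ b) :
    b ^ 2 + 2 * (exp 1 - 1) * a ^ 2 ≤ (2.37 * max a b) ^ 2 := by
  have hmax : 0 ≤ max a b := le_max_of_le_left ha
  have hb2 : b ^ 2 ≤ max a b ^ 2 := pow_le_pow_left₀ hb (le_max_right a b) 2
  have ha2 : a ^ 2 ≤ max a b ^ 2 := pow_le_pow_left₀ ha (le_max_left a b) 2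
  nlinarith [exp_one_lt_d9, sq_nonneg a]

namespace ProbabilityTheory

variable {Ω ι : Type*} [MeasurableSpace Ω] {μ : Measure Ω}

lemma mgf_le_exp_mul_integral_of_mem_Icc [IsProbabilityMeasure μ] {X : Ω → ℝ}
    (hX : AEMeasurable X μ) {t b : ℝ} (ht : 0 ≤ t) (htb : t * b ≤ 1)
    (hXb : ∀ᵐ ω ∂μ, X ω ∈ Icc 0 b) :
    mgf X μ t ≤ exp ((exp 1 - 1) * t * μ[X]) := by
  have htX : ∀ᵐ ω ∂μ, t * X ω ∈ Icc 0 1 := hXb.mono fun ω hω =>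
    ⟨mul_nonneg ht hω.1, (mul_le_mul_of_nonneg_left hω.2 ht).trans htb⟩
  have hXint : Integrable X μ := Integrable.of_bound hX.aestronglyMeasurable b <|
    hXb.mono fun ω hω => by rw [norm_of_nonneg hω.1]; exact hω.2
  have hexp_int : Integrable (fun ω => exp (t * X ω)) μ :=
    Integrable.of_bound (hX.const_mul t).exp.aestronglyMeasurable (exp 1) <|
      htX.mono fun ω hω => by rw [norm_of_nonneg (exp_pos _).le]; exact exp_le_exp.2 hω.2
  calc mgf X μ t ≤ ∫ ω, (1 + (exp 1 - 1) * t * X ω) ∂μ := by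
        refine integral_mono_ae hexp_int ((integrable_const 1).add (hXint.const_mul _)) ?_
        filter_upwards [htX] with ω hω
        rw [mul_assoc]
        exact exp_le_one_add_exp_one_sub_one_mul hω.1 hω.2
    _ = 1 + (exp 1 - 1) * t * μ[X] := by
        rw [integral_add (integrable_const 1) (hXint.const_mul _), integral_const_mul]
        simp
    _ ≤ exp ((exp 1 - 1) * t * μ[X]) := by linarith [add_one_le_exp ((exp 1 - 1) * t * μ[X])]

theorem measureReal_le_exp_of_le_sum_of_mem_Icc {X : ι → Ω → ℝ} (hindep : iIndepFun X μ)
    (hmeas : ∀ i, Measurable (X i)) {b : ℝ} (hb : 0 < b)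
    (hXb : ∀ i, ∀ᵐ ω ∂μ, X i ω ∈ Icc 0 b) (s : Finset ι) (ε : ℝ) :
    μ.real {ω | ε ≤ ∑ i ∈ s, X i ω} ≤ exp (-(ε - (exp 1 - 1) * ∑ i ∈ s, μ[X i]) / b) := by
  have := hindep.isProbabilityMeasure
  have ht : b⁻¹ * b ≤ 1 := (inv_mul_cancel₀ hb.ne').le
  have hexp_int : ∀ i ∈ s, Integrable (fun ω => exp (b⁻¹ * X i ω)) μ := fun i _ =>
    Integrable.of_bound ((hmeas i).const_mul _).exp.aestronglyMeasurable (exp 1) <|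
      (hXb i).mono fun ω hω => by
        rw [norm_of_nonneg (exp_pos _).le, exp_le_exp]
        exact (mul_le_mul_of_nonneg_left hω.2 (inv_nonneg.2 hb.le)).trans ht
  have hchernoff := measure_ge_le_exp_mul_mgf ε (inv_nonneg.2 hb.le)
    (hindep.integrable_exp_mul_sum hmeas hexp_int)
  simp only [Finset.sum_apply] at hchernoff
  calc μ.real {ω | ε ≤ ∑ i ∈ s, X i ω}
      ≤ exp (-b⁻¹ * ε) * ∏ i ∈ s, exp ((exp 1 - 1) * b⁻¹ * μ[X i]) := by
        rw [hindep.mgf_sum hmeas] at hchernoff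
        refine hchernoff.trans (mul_le_mul_of_nonneg_left ?_ (exp_pos _).le)
        exact Finset.prod_le_prod (fun i _ => mgf_nonneg) fun i _ =>
          mgf_le_exp_mul_integral_of_mem_Icc (hmeas i).aemeasurable (inv_nonneg.2 hb.le) ht (hXb i)
    _ = exp (-(ε - (exp 1 - 1) * ∑ i ∈ s, μ[X i]) / b) := by
        rw [← exp_sum, ← exp_add, ← Finset.mul_sum]
        congr 1
        ring

theorem measureReal_le_exp_of_le_sum_comp {α : Type*} [MeasurableSpace α] {X : ι → Ω → α}
    (hindep : iIndepFun X μ) (hmeas : ∀ i, Measurable (X i)) {ν : Measure α}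
    (hmap : ∀ i, μ.map (X i) = ν) {g : α → ℝ} (hg : Measurable g) {b : ℝ} (hb : 0 < b)
    (hgb : ∀ x, g x ∈ Icc 0 b) (s : Finset ι) (ε : ℝ) :
    μ.real {ω | ε ≤ ∑ i ∈ s, g (X i ω)}
      ≤ exp (-(ε - (exp 1 - 1) * s.card * ∫ x, g x ∂ν) / b) := by
  have hmean : ∀ i, ∫ ω, g (X i ω) ∂μ = ∫ x, g x ∂ν := fun i => by
    rw [← hmap i, integral_map (hmeas i).aemeasurable hg.aestronglyMeasurable]
  have := measureReal_le_exp_of_le_sum_of_mem_Icc (hindep.comp (fun _ => g) fun _ => hg)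
    (fun i => hg.comp (hmeas i)) hb (fun i => ae_of_all _ fun ω => hgb _) s ε
  simpa [hmean, mul_assoc] using this

end ProbabilityTheory

lemma measureReal_le_exp_of_le_sum_norm_pow_four {Θ ι E : Type*} [MeasurableSpace Θ]
    {μ : Measure Θ} [Fintype ι] [NormedAddCommGroup E] [MeasurableSpace E] [OpensMeasurableSpace E]
    {X : ι → Θ → ℝ} (hindep : iIndepFun X μ) (hmeas : ∀ i, Measurable (X i))
    {s : Set ℝ} {c : ℝ} (hunif : ∀ i, μ.map (X i) = (ENNReal.ofReal c)⁻¹ • volume.restrict s)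
    (hc : 0 ≤ c)
    {f : ℝ → E} (hf : Measurable f) {K : ℝ} (hK : 0 < K) (hfK : ∀ x, ‖f x‖ ≤ K) (ε : ℝ) :
    μ.real {θ | ε ≤ ∑ i, ‖f (X i θ)‖ ^ 4}
      ≤ exp (-(ε - (exp 1 - 1) * Fintype.card ι * ((∫ x in s, ‖f x‖ ^ 4) / c)) / K ^ 4) := by
  have hmean : ∫ x, ‖f x‖ ^ 4 ∂((ENNReal.ofReal c)⁻¹ • volume.restrict s)
      = (∫ x in s, ‖f x‖ ^ 4) / c := by
    rw [integral_smul_measure, ENNReal.toReal_inv, ENNReal.toReal_ofReal hc, smul_eq_mul,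
      inv_mul_eq_div]
  rw [← hmean, ← Finset.card_univ]
  exact measureReal_le_exp_of_le_sum_comp hindep hmeas hunif (hf.norm.pow_const 4) (by positivity)
    (fun x => ⟨by positivity, pow_le_pow_left₀ (norm_nonneg _) (hfK x) 4⟩) Finset.univ ε

theorem M3_concentration_general
    {Θ : Type*} [MeasurableSpace Θ] (μ : Measure Θ) [IsProbabilityMeasure μ]
    (ωmax : ℝ) (hωmax : 0 < ωmax)
    (shat : ℝ → ℂ) (hmeas : Measurable shat)
    (hbd : ∃ C : ℝ, ∀ x : ℝ, ‖shat x‖ ≤ C)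
    (hvanish : ∀ x : ℝ, x ∉ Set.Icc (-ωmax) ωmax → shat x = 0)
    (m : ℕ)
    (ω ω' : Fin m → Θ → ℝ)
    (hωmeas : ∀ k, Measurable (ω k)) (hω'meas : ∀ k, Measurable (ω' k))
    (hindep : iIndepFun (Sum.elim ω ω') μ)
    (hunif : ∀ k, μ.map (ω k)
      = (ENNReal.ofReal (2 * ωmax))⁻¹ • volume.restrict (Set.Icc (-ωmax) ωmax))
    (hunif' : ∀ k, μ.map (ω' k)
      = (ENNReal.ofReal (2 * ωmax))⁻¹ • volume.restrict (Set.Icc (-ωmax) ωmax))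
    (nrm4 nrmInf : ℝ)
    (h4 : nrm4 ^ 4 = ∫ w in Set.Icc (-ωmax) ωmax, ‖shat w‖ ^ 4)
    (hInf : nrmInf = ⨆ w ∈ Set.Icc (-ωmax) ωmax, ‖shat w‖)
    (M M₁ : ℝ)
    (hM : M = nrmInf ^ 2)
    (hM₁ : M₁ = Real.sqrt (m / (2 * ωmax)) * nrm4 ^ 2)
    (M₃ : Θ → ℝ)
    (hM₃ : ∀ θ, M₃ θ
      = Real.sqrt (∑ k : Fin m, (‖shat (ω k θ)‖ ^ 4 + ‖shat (ω' k θ)‖ ^ 4)))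
    (δ : ℝ) (hδ : 0 < δ) :
    μ {θ | 2.37 * max M₁ (M * Real.sqrt (Real.log (4 / δ))) < M₃ θ}
      ≤ ENNReal.ofReal (δ / 4) := by
  rcases le_or_gt 4 δ with hδ4 | hδ4
  · exact prob_le_one.trans (ENNReal.one_le_ofReal.2 (by linarith))
  set L := log (4 / δ)
  have hL : 0 ≤ L := log_nonneg (by rw [le_div_iff₀ hδ]; linarith)
  have hle : ∀ w, ‖shat w‖ ≤ nrmInf := hInf ▸ Real.le_biSup_of_eq_zero_of_notMem
    (hbd.imp fun C hC => by rintro _ ⟨w, rfl⟩; exact hC w) (fun w => norm_nonneg _)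
    (fun w hw => by rw [hvanish w hw, norm_zero])
  have hM₁0 : 0 ≤ M₁ := hM₁ ▸ by positivity
  have hM0 : 0 ≤ M := hM ▸ by positivity
  set T := max M₁ (M * sqrt L)
  have hT : 0 ≤ 2.37 * T := by positivity
  rcases (le_trans (norm_nonneg _) (hle 0)).eq_or_lt with h0 | hpos
  · have hzero : ∀ w, shat w = 0 := fun w => norm_le_zero_iff.1 (h0 ▸ hle w)
    simp [hM₃, hzero, not_lt.2 hT]
  have htail := measureReal_le_exp_of_le_sum_norm_pow_four hindep (Sum.rec hωmeas hω'meas)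
    (by rintro (k | k); exacts [hunif k, hunif' k]) (by positivity) hmeas hpos hle
    ((2.37 * T) ^ 2)
  have hM₁sq : M₁ ^ 2 = m * (nrm4 ^ 4 / (2 * ωmax)) := by
    rw [hM₁, mul_pow, sq_sqrt (by positivity)]
    ring
  have hMsq : (M * sqrt L) ^ 2 = nrmInf ^ 4 * L := by
    rw [mul_pow, sq_sqrt hL, hM]
    ring
  calc μ {θ | 2.37 * T < M₃ θ}
      ≤ μ {θ | (2.37 * T) ^ 2 ≤ ∑ i, ‖shat (Sum.elim ω ω' i θ)‖ ^ 4} := by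
        refine measure_mono fun θ hθ => ?_
        simp only [mem_ofPred_eq, Fintype.sum_sum_type, Sum.elim_inl, Sum.elim_inr,
          ← Finset.sum_add_distrib]
        exact ((lt_sqrt hT).1 (hM₃ θ ▸ hθ)).le
    _ = ENNReal.ofReal (μ.real _) := (ofReal_measureReal).symm
    _ ≤ ENNReal.ofReal (exp (-L)) := by
        refine ENNReal.ofReal_le_ofReal (htail.trans (exp_le_exp.2 ?_))
        have hkey := sq_add_two_mul_exp_one_sub_one_mul_sq_le hM₁0 (mul_nonneg hM0 (sqrt_nonneg L))
        rw [hM₁sq, hMsq] at hkey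
        rw [← h4, Fintype.card_sum, Fintype.card_fin, neg_div, neg_le_neg_iff,
          le_div_iff₀ (by positivity)]
        push_cast
        linarith
    _ = ENNReal.ofReal (δ / 4) := by rw [exp_neg, exp_log (by positivity), inv_div]

/-- **Concentration of `M₃`.**
Fix `δ > 0`.  Then `P(M₃ > 2.37 max(M₁, M√(log(4/δ)))) ≤ δ/4`, where
`M = ‖ŝ‖_∞²`, `M₁ = √(m/|Ω|)‖ŝ‖₄²`, and
`M₃ = (∑_k |ŝ(ω_k)|⁴ + |ŝ(ω'_k)|⁴)^{1/2}`. -/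
theorem M3_concentration
    {Θ : Type*} [MeasurableSpace Θ] (μ : Measure Θ) [IsProbabilityMeasure μ]
    (ωmax : ℝ) (hωmax : 0 < ωmax)
    (shat : ℝ → ℂ) (hmeas : Measurable shat)
    (hbd : ∃ C : ℝ, ∀ x : ℝ, ‖shat x‖ ≤ C)
    (hvanish : ∀ x : ℝ, x ∉ Set.Icc (-ωmax) ωmax → shat x = 0)
    (m : ℕ) (hm : 0 < m)
    (ω ω' : Fin m → Θ → ℝ)
    (hωmeas : ∀ k, Measurable (ω k)) (hω'meas : ∀ k, Measurable (ω' k))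
    (hindep : iIndepFun (Sum.elim ω ω') μ)
    (hunif : ∀ k, μ.map (ω k)
      = (ENNReal.ofReal (2 * ωmax))⁻¹ • volume.restrict (Set.Icc (-ωmax) ωmax))
    (hunif' : ∀ k, μ.map (ω' k)
      = (ENNReal.ofReal (2 * ωmax))⁻¹ • volume.restrict (Set.Icc (-ωmax) ωmax))
    (nrm4 nrmInf : ℝ) (h4pos : 0 < nrm4)
    (h4 : nrm4 ^ 4 = ∫ w in Set.Icc (-ωmax) ωmax, ‖shat w‖ ^ 4)
    (hInf : nrmInf = ⨆ w ∈ Set.Icc (-ωmax) ωmax, ‖shat w‖)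
    (M M₁ : ℝ)
    (hM : M = nrmInf ^ 2)
    (hM₁ : M₁ = Real.sqrt (m / (2 * ωmax)) * nrm4 ^ 2)
    (M₃ : Θ → ℝ)
    (hM₃ : ∀ θ, M₃ θ
      = Real.sqrt (∑ k : Fin m, (‖shat (ω k θ)‖ ^ 4 + ‖shat (ω' k θ)‖ ^ 4)))
    (δ : ℝ) (hδ : 0 < δ) :
    μ {θ | 2.37 * max M₁ (M * Real.sqrt (Real.log (4 / δ))) < M₃ θ}
      ≤ ENNReal.ofReal (δ / 4) :=
  M3_concentration_general μ ωmax hωmax shat hmeas hbd hvanish m ω ω' hωmeas hω'meas hindep hunif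
    hunif' nrm4 nrmInf h4 hInf M M₁ hM hM₁ M₃ hM₃ δ hδ
end

section
/- Fix δ > 0 and set a = 1+√3. Suppose m ≥ a² · max( |Ω|·‖ŝ‖₄⁴/‖ŝ‖₂⁴ , |Ω|·‖ŝ‖_∞²/‖ŝ‖₂² ) · log(2/δ). Then the random variable M₄² = ∑_{k=1}^m |ŝ(ω_k)|² satisfies P( M₄² > 2·m·|Ω|^{−1}·‖ŝ‖₂² ) ≤ δ/2. -/
open MeasureTheory ProbabilityTheory Real Set

/-!
Each summand `X_k = |ŝ(ω_k)|²` lies in `[0, B]` with `B = ‖ŝ‖_∞²` and has mean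
`ν = |Ω|⁻¹‖ŝ‖₂²`. For `0 ≤ t ≤ 1/B` one has `e^{tx} ≤ 1 + tx + (tx)² ≤ 1 + t(1 + tB)x` on
`[0, B]`, so `E e^{tX_k} ≤ exp(t(1 + tB)ν)`: the variance is controlled by `Bν`, not by `B²`.
The Chernoff bound at `t = 1/(2B)` then gives `P(∑ X_k ≥ 2mν) ≤ exp(-mν/(4B))`, and the
sample-size assumption (with `(1+√3)² ≥ 4`) makes this at most `δ/2`.
-/

lemma le_cbiSup_of_bddAbove_range {α β : Type*} [ConditionallyCompleteLattice β] {f : α → β}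
    (hf : BddAbove (range f)) {s : Set α} {x : α} (hx : x ∈ s) :
    f x ≤ ⨆ w ∈ s, f w :=
  le_ciSup₂ (f := fun w (_ : w ∈ s) => f w)
    (hf.mono (iUnion_subset fun w => range_subset_iff.2 fun _ => mem_range_self w)) x hx

lemma exp_neg_le_of_log_inv_le {x y : ℝ} (hy : 0 < y) (h : log y⁻¹ ≤ x) : exp (-x) ≤ y :=
  (exp_le_exp.2 (by linarith [log_inv y])).trans_eq (exp_log hy)

lemma exp_mul_le_one_add_mul_of_mem_Icc {t B x : ℝ} (ht : 0 ≤ t) (htB : t * B ≤ 1)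
    (hx : x ∈ Icc 0 B) : exp (t * x) ≤ 1 + t * (1 + t * B) * x := by
  have htx : |t * x| ≤ 1 := by
    rw [abs_of_nonneg (mul_nonneg ht hx.1)]
    exact (mul_le_mul_of_nonneg_left hx.2 ht).trans htB
  have hquad := (le_abs_self _).trans (abs_exp_sub_one_sub_id_le htx)
  have hsq : (t * x) ^ 2 ≤ t * (t * B) * x := by
    nlinarith [mul_le_mul_of_nonneg_left hx.2 (mul_nonneg (sq_nonneg t) hx.1)]
  nlinarith

section Bernstein

variable {Θ : Type*} [MeasurableSpace Θ] {μ : Measure Θ} [IsProbabilityMeasure μ]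

lemma mgf_le_exp_of_ae_mem_Icc {X : Θ → ℝ} {B t : ℝ} (hX : AEMeasurable X μ)
    (hXB : ∀ᵐ θ ∂μ, X θ ∈ Icc 0 B) (ht : 0 ≤ t) (htB : t * B ≤ 1) :
    mgf X μ t ≤ exp (t * (1 + t * B) * μ[X]) := by
  have hX_int : Integrable X μ :=
    .of_bound hX.aestronglyMeasurable B <| hXB.mono fun θ hθ => by
      rw [norm_of_nonneg hθ.1]; exact hθ.2
  have hexp_int : Integrable (fun θ => exp (t * X θ)) μ :=
    .of_bound (hX.const_mul t).exp.aestronglyMeasurable (exp (t * B)) <| hXB.mono fun θ hθ => by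
      rw [norm_of_nonneg (exp_pos _).le, exp_le_exp]
      exact mul_le_mul_of_nonneg_left hθ.2 ht
  calc mgf X μ t ≤ ∫ θ, (1 + t * (1 + t * B) * X θ) ∂μ :=
        integral_mono_ae hexp_int ((integrable_const 1).add (hX_int.const_mul _)) <|
          hXB.mono fun θ hθ => exp_mul_le_one_add_mul_of_mem_Icc ht htB hθ
    _ = t * (1 + t * B) * μ[X] + 1 := by
        rw [integral_add (integrable_const 1) (hX_int.const_mul _), integral_const_mul]
        simp [add_comm]
    _ ≤ exp (t * (1 + t * B) * μ[X]) := add_one_le_exp _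

lemma measure_sum_ge_two_mul_card_mul_le_of_iIndepFun {ι : Type*} [Fintype ι]
    {X : ι → Θ → ℝ} {B ν : ℝ} (hB : 0 < B) (hmeas : ∀ i, Measurable (X i)) (hindep : iIndepFun X μ)
    (hbound : ∀ i, ∀ᵐ θ ∂μ, X i θ ∈ Icc 0 B) (hmean : ∀ i, μ[X i] ≤ ν) :
    μ {θ | 2 * Fintype.card ι * ν ≤ ∑ i, X i θ}
      ≤ ENNReal.ofReal (exp (-(Fintype.card ι * ν / (4 * B)))) := by
  set t := (2 * B)⁻¹
  have ht : 0 ≤ t := by positivity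
  have htB : t * B = 1 / 2 := by simp only [t]; field_simp
  have hmgf_le : ∀ i, mgf (X i) μ t ≤ exp (t * (1 + t * B) * ν) := fun i =>
    (mgf_le_exp_of_ae_mem_Icc (hmeas i).aemeasurable (hbound i) ht (by linarith)).trans <|
      exp_le_exp.2 (mul_le_mul_of_nonneg_left (hmean i) (by positivity))
  have hsum_le : ∀ᵐ θ ∂μ, ∑ i, X i θ ≤ Fintype.card ι * B :=
    (ae_all_iff.2 hbound).mono fun θ hθ => by
      simpa using Finset.sum_le_sum fun i (_ : i ∈ Finset.univ) => (hθ i).2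
  have hexp_int : Integrable (fun θ => exp (t * (∑ i, X i) θ)) μ :=
    .of_bound (by fun_prop) (exp (t * (Fintype.card ι * B))) <| hsum_le.mono fun θ hθ => by
      rw [norm_of_nonneg (exp_pos _).le, exp_le_exp, Finset.sum_apply]
      exact mul_le_mul_of_nonneg_left hθ ht
  have hchernoff := measure_ge_le_exp_mul_mgf (2 * Fintype.card ι * ν) ht hexp_int
  rw [hindep.mgf_sum hmeas] at hchernoff
  simp only [Finset.sum_apply] at hchernoff
  rw [← ofReal_measureReal]
  refine ENNReal.ofReal_le_ofReal (hchernoff.trans ?_)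
  calc exp (-t * (2 * Fintype.card ι * ν)) * ∏ i, mgf (X i) μ t
      ≤ exp (-t * (2 * Fintype.card ι * ν)) * ∏ _i : ι, exp (t * (1 + t * B) * ν) := by
        gcongr with i
        · exact fun i _ => mgf_nonneg
        · exact hmgf_le i
    _ = exp (-(Fintype.card ι * ν / (4 * B))) := by
        rw [Finset.prod_const, Finset.card_univ, ← exp_nat_mul, ← exp_add, htB]
        congr 1
        simp only [t]
        field_simp
        ring

end Bernstein

section UniformDistribution

variable {Θ E : Type*} [MeasurableSpace Θ] [MeasurableSpace E] {μ : Measure Θ} {ρ : Measure E}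
  {X : Θ → E} {c : ENNReal} {K : Set E}

lemma ae_mem_of_map_eq_smul_restrict (hX : AEMeasurable X μ) (hK : MeasurableSet K)
    (hmap : μ.map X = c • ρ.restrict K) : ∀ᵐ θ ∂μ, X θ ∈ K :=
  ae_of_ae_map hX <| hmap ▸ Measure.ae_smul_measure (ae_restrict_mem hK) c

lemma integral_comp_eq_of_map_eq_smul_restrict (hX : Measurable X)
    (hmap : μ.map X = c • ρ.restrict K) {g : E → ℝ} (hg : Measurable g) :
    ∫ θ, g (X θ) ∂μ = c.toReal * ∫ x in K, g x ∂ρ := by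
  rw [← integral_map hX.aemeasurable hg.aestronglyMeasurable, hmap, integral_smul_measure,
    smul_eq_mul]

end UniformDistribution

lemma le_div_of_sample_size_bound {m r x L : ℝ} (hm : 0 ≤ m) (hr : 0 < r)
    (h : m ≥ (1 + √3) ^ 2 * max x r * L) : L ≤ m / (4 * r) := by
  rw [le_div_iff₀ (by positivity)]
  rcases le_or_gt L 0 with hL | hL
  · nlinarith
  have ha : 4 ≤ (1 + √3) ^ 2 := by nlinarith [one_le_sqrt.2 (by norm_num : (1 : ℝ) ≤ 3)]
  nlinarith [mul_le_mul ha (le_max_right x r) hr.le (by positivity)]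

theorem M4_concentration_general
    {Θ : Type*} [MeasurableSpace Θ] (μ : Measure Θ) [IsProbabilityMeasure μ]
    (ωmax : ℝ) (hωmax : 0 < ωmax)
    (shat : ℝ → ℂ) (hmeas : Measurable shat)
    (hbd : ∃ C : ℝ, ∀ x : ℝ, ‖shat x‖ ≤ C)
    (m : ℕ)
    (ω : Fin m → Θ → ℝ) (hωmeas : ∀ k, Measurable (ω k))
    (hindep : iIndepFun ω μ)
    (hunif : ∀ k, μ.map (ω k)
      = (ENNReal.ofReal (2 * ωmax))⁻¹ • volume.restrict (Set.Icc (-ωmax) ωmax))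
    (nrm2 nrm4 nrmInf : ℝ) (h2pos : 0 < nrm2)
    (h2 : nrm2 ^ 2 = ∫ w in Set.Icc (-ωmax) ωmax, ‖shat w‖ ^ 2)
    (hInf : nrmInf = ⨆ w ∈ Set.Icc (-ωmax) ωmax, ‖shat w‖)
    (δ : ℝ) (hδ : 0 < δ)
    (hmBnd : (m : ℝ) ≥ (1 + Real.sqrt 3) ^ 2
      * max ((2 * ωmax) * nrm4 ^ 4 / nrm2 ^ 4) ((2 * ωmax) * nrmInf ^ 2 / nrm2 ^ 2)
      * Real.log (2 / δ)) :
    μ {θ | 2 * m * (2 * ωmax)⁻¹ * nrm2 ^ 2 < ∑ k : Fin m, ‖shat (ω k θ)‖ ^ 2}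
      ≤ ENNReal.ofReal (δ / 2) := by
  set ν := (2 * ωmax)⁻¹ * nrm2 ^ 2
  have hsq_meas : Measurable fun w => ‖shat w‖ ^ 2 := hmeas.norm.pow_const 2
  have hsq_le : ∀ w ∈ Icc (-ωmax) ωmax, ‖shat w‖ ^ 2 ≤ nrmInf ^ 2 := fun w hw => by
    obtain ⟨C, hC⟩ := hbd
    gcongr
    exact hInf ▸ le_cbiSup_of_bddAbove_range ⟨C, forall_mem_range.2 hC⟩ hw
  have hB : 0 < nrmInf ^ 2 := by
    by_contra! hB
    have hzero := setIntegral_eq_zero_of_forall_eq_zero (μ := volume) fun w hw =>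
      le_antisymm ((hsq_le w hw).trans hB) (by positivity)
    nlinarith [h2.trans hzero]
  have hmean : ∀ k, μ[fun θ => ‖shat (ω k θ)‖ ^ 2] = ν := fun k => by
    rw [integral_comp_eq_of_map_eq_smul_restrict (hωmeas k) (hunif k) hsq_meas, ← h2,
      ENNReal.toReal_inv, ENNReal.toReal_ofReal (by positivity)]
  have hbound : ∀ k, ∀ᵐ θ ∂μ, ‖shat (ω k θ)‖ ^ 2 ∈ Icc 0 (nrmInf ^ 2) := fun k =>
    (ae_mem_of_map_eq_smul_restrict (hωmeas k).aemeasurable measurableSet_Icc (hunif k)).mono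
      fun θ hθ => ⟨by positivity, hsq_le _ hθ⟩
  have htail := measure_sum_ge_two_mul_card_mul_le_of_iIndepFun hB
    (fun k => hsq_meas.comp (hωmeas k)) (hindep.comp _ fun _ => hsq_meas) hbound
    fun k => (hmean k).le
  rw [Fintype.card_fin] at htail
  have hlog : log (δ / 2)⁻¹ ≤ m * ν / (4 * nrmInf ^ 2) := by
    have := le_div_of_sample_size_bound m.cast_nonneg (by positivity) hmBnd
    rw [inv_div]
    convert this using 1
    simp only [ν]
    field_simp
  calc _ ≤ μ {θ | 2 * m * ν ≤ ∑ k, ‖shat (ω k θ)‖ ^ 2} :=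
        measure_mono fun θ hθ => by
          simp only [mem_ofPred_eq, ν, ← mul_assoc] at hθ ⊢
          exact hθ.le
    _ ≤ _ := htail
    _ ≤ _ := ENNReal.ofReal_le_ofReal (exp_neg_le_of_log_inv_le (by positivity) hlog)

/-- **Bernstein bound for `M₄²`.**
Fix `δ > 0` and set `a = 1+√3`.  If
`m ≥ a² max(|Ω|‖ŝ‖₄⁴/‖ŝ‖₂⁴, |Ω|‖ŝ‖_∞²/‖ŝ‖₂²) log(2/δ)`, then
`P(M₄² > 2m|Ω|⁻¹‖ŝ‖₂²) ≤ δ/2`, where `M₄² = ∑_k |ŝ(ω_k)|²`. -/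
theorem M4_concentration
    {Θ : Type*} [MeasurableSpace Θ] (μ : Measure Θ) [IsProbabilityMeasure μ]
    (ωmax : ℝ) (hωmax : 0 < ωmax)
    (shat : ℝ → ℂ) (hmeas : Measurable shat)
    (hbd : ∃ C : ℝ, ∀ x : ℝ, ‖shat x‖ ≤ C)
    (hvanish : ∀ x : ℝ, x ∉ Set.Icc (-ωmax) ωmax → shat x = 0)
    (m : ℕ) (hm : 0 < m)
    (ω : Fin m → Θ → ℝ) (hωmeas : ∀ k, Measurable (ω k))
    (hindep : iIndepFun ω μ)
    (hunif : ∀ k, μ.map (ω k)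
      = (ENNReal.ofReal (2 * ωmax))⁻¹ • volume.restrict (Set.Icc (-ωmax) ωmax))
    (nrm2 nrm4 nrmInf : ℝ) (h2pos : 0 < nrm2)
    (h2 : nrm2 ^ 2 = ∫ w in Set.Icc (-ωmax) ωmax, ‖shat w‖ ^ 2)
    (h4 : nrm4 ^ 4 = ∫ w in Set.Icc (-ωmax) ωmax, ‖shat w‖ ^ 4)
    (hInf : nrmInf = ⨆ w ∈ Set.Icc (-ωmax) ωmax, ‖shat w‖)
    (δ : ℝ) (hδ : 0 < δ)
    (hmBnd : (m : ℝ) ≥ (1 + Real.sqrt 3) ^ 2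
      * max ((2 * ωmax) * nrm4 ^ 4 / nrm2 ^ 4) ((2 * ωmax) * nrmInf ^ 2 / nrm2 ^ 2)
      * Real.log (2 / δ)) :
    μ {θ | 2 * m * (2 * ωmax)⁻¹ * nrm2 ^ 2 < ∑ k : Fin m, ‖shat (ω k θ)‖ ^ 2}
      ≤ ENNReal.ofReal (δ / 2) :=
  M4_concentration_general μ ωmax hωmax shat hmeas hbd m ω hωmeas hindep hunif nrm2 nrm4 nrmInf
    h2pos h2 hInf δ hδ hmBnd
end
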